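/- Let h be a Hermitian form of signature (2,1) on ℂ³, let c₁,c₂ have positive norm with C₁ ≠ C₂ (c₁,c₂ linearly independent), and let p₁,p₂ be nonzero isotropic vectors with h(c₁,p₂), h(p₁,c₂), h(c₁,c₂), h(p₁,p₂) all nonzero. Define m₁₂ = h(c₁,c₂)h(p₁,p₂)/(h(c₁,p₂)h(p₁,c₂)) and φ₁₂ = |h(c₁,c₂)|²/(h(c₁,c₁)h(c₂,c₂)). Suppose h(p₁,c₁) = 0 and h(p₂,c₂) = 0 (p₁ ∈ C₁, p₂ ∈ C₂). Then m₁₂ ≠ 1 and φ₁₂ = |m₁₂/(m₁₂−1)|². -/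

import Mathlib

open Matrix Complex

noncomputable def herm (H : Matrix (Fin 3) (Fin 3) ℂ) (v w : Fin 3 → ℂ) : ℂ :=
  ∑ i, ∑ j, v i * H i j * (starRingEnd ℂ) (w j)

/-! The four vectors `c₁, c₂, p₁, p₂` live in `ℂ³`, so their Gram matrix for `h` is singular.
Isotropy of `pᵢ` and `h(pᵢ, cᵢ) = 0` put six zeros in that matrix, and its determinant reduces to
`|h(c₁,c₂) h(p₁,p₂) - h(c₁,p₂) h(p₁,c₂)|² - h(c₁,c₁) h(c₂,c₂) |h(p₁,p₂)|²`. This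
quantity vanishing gives `m₁₂ ≠ 1`, since `h(c₁,c₁) h(c₂,c₂) |h(p₁,p₂)|² > 0`, and, after division
by `|h(c₁,p₂) h(p₁,c₂)|²`, the identity `|m₁₂ - 1|² φ₁₂ = |m₁₂|²`. -/

open ComplexConjugate

theorem Matrix.det_mul_eq_zero_of_card_lt {m n R : Type*} [Fintype m] [Fintype n]
    [DecidableEq m] [Field R] (A : Matrix m n R) (B : Matrix n m R)
    (h : Fintype.card n < Fintype.card m) : (A * B).det = 0 := by
  by_contra hdet
  have hrank : (A * B).rank = Fintype.card m :=
    rank_of_isUnit _ ((isUnit_iff_isUnit_det _).mpr (Ne.isUnit hdet))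
  have := (A.rank_mul_le_left B).trans A.rank_le_card_width
  omega

theorem herm_conj {H : Matrix (Fin 3) (Fin 3) ℂ} (hH : Hᴴ = H) (v w : Fin 3 → ℂ) :
    conj (herm H v w) = herm H w v := by
  unfold herm
  rw [map_sum, Finset.sum_comm]
  refine Finset.sum_congr rfl fun i _ => ?_
  rw [map_sum]
  refine Finset.sum_congr rfl fun j _ => ?_
  rw [show H j i = conj (H i j) from congrFun (congrFun hH.symm j) i]
  simp only [map_mul, conj_conj]
  ring

theorem herm_self_ofReal_re {H : Matrix (Fin 3) (Fin 3) ℂ} (hH : Hᴴ = H) (v : Fin 3 → ℂ) :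
    ((herm H v v).re : ℂ) = herm H v v :=
  conj_eq_iff_re.mp (herm_conj hH v v)

theorem of_herm_eq_mul_mul_conjTranspose {m : Type*} (H : Matrix (Fin 3) (Fin 3) ℂ)
    (V : m → Fin 3 → ℂ) : of (fun i j => herm H (V i) (V j)) = of V * H * (of V)ᴴ := by
  ext i j
  simp only [herm, of_apply, mul_apply, conjTranspose_apply, Finset.sum_mul, RCLike.star_def]
  exact Finset.sum_comm

theorem det_gram_eq_zero {m : Type*} [Fintype m] [DecidableEq m] (H : Matrix (Fin 3) (Fin 3) ℂ)
    (V : m → Fin 3 → ℂ) (hm : 3 < Fintype.card m) :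
    (of fun i j => herm H (V i) (V j)).det = 0 := by
  rw [of_herm_eq_mul_mul_conjTranspose, Matrix.mul_assoc]
  exact det_mul_eq_zero_of_card_lt _ _ (by simpa using hm)

theorem det_flag_gram (a b x y u v : ℂ) :
    !![a, x, 0, u; conj x, b, conj v, 0; 0, v, 0, y; conj u, 0, conj y, 0].det =
      (x * y - u * v) * conj (x * y - u * v) - a * b * (y * conj y) := by
  simp [det_succ_row_zero, Fin.sum_univ_succ, Fin.succAbove]
  ring

theorem normSq_mul_sub_mul_eq_of_flags {H : Matrix (Fin 3) (Fin 3) ℂ} (hH : Hᴴ = H)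
    {c₁ c₂ p₁ p₂ : Fin 3 → ℂ} (hiso1 : herm H p₁ p₁ = 0) (hiso2 : herm H p₂ p₂ = 0)
    (horth1 : herm H p₁ c₁ = 0) (horth2 : herm H p₂ c₂ = 0) :
    normSq (herm H c₁ c₂ * herm H p₁ p₂ - herm H c₁ p₂ * herm H p₁ c₂) =
      (herm H c₁ c₁).re * (herm H c₂ c₂).re * normSq (herm H p₁ p₂) := by
  have hgram : (of fun i j => herm H (![c₁, c₂, p₁, p₂] i) (![c₁, c₂, p₁, p₂] j)) =
      !![herm H c₁ c₁, herm H c₁ c₂, 0, herm H c₁ p₂;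
        conj (herm H c₁ c₂), herm H c₂ c₂, conj (herm H p₁ c₂), 0;
        0, herm H p₁ c₂, 0, herm H p₁ p₂;
        conj (herm H c₁ p₂), 0, conj (herm H p₁ p₂), 0] := by
    ext i j
    fin_cases i <;> fin_cases j <;>
      simp [herm_conj hH, ← herm_conj hH p₁ c₁, ← herm_conj hH p₂ c₂, *]
  have hdet := det_gram_eq_zero H ![c₁, c₂, p₁, p₂] (by simp)
  rw [hgram, det_flag_gram, sub_eq_zero, ← herm_self_ofReal_re hH c₁,
    ← herm_self_ofReal_re hH c₂, mul_conj, mul_conj] at hdet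
  exact_mod_cast hdet

theorem ne_one_and_normSq_div_eq_of_normSq_sub_eq {a b : ℝ} {x y u v : ℂ} (hab : 0 < a * b)
    (hy : y ≠ 0) (huv : u * v ≠ 0) (h : normSq (x * y - u * v) = a * b * normSq y) :
    x * y / (u * v) ≠ 1 ∧
      normSq x / (a * b) = normSq (x * y / (u * v) / (x * y / (u * v) - 1)) := by
  have hsub : x * y - u * v ≠ 0 := by
    rw [← normSq_pos, h]
    exact mul_pos hab (normSq_pos.mpr hy)
  refine ⟨fun hm => hsub (sub_eq_zero.mpr ((div_eq_one_iff_eq huv).mp hm)), ?_⟩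
  rw [div_sub_one huv, div_div_div_cancel_right₀ huv, normSq_div, normSq_mul, h,
    mul_div_mul_right _ _ (normSq_pos.mpr hy).ne']

theorem stmt5_general (H : Matrix (Fin 3) (Fin 3) ℂ) (hH : Hᴴ = H)
    (c₁ c₂ p₁ p₂ : Fin 3 → ℂ)
    (hc1 : 0 < (herm H c₁ c₁).re) (hc2 : 0 < (herm H c₂ c₂).re)
    (hiso1 : herm H p₁ p₁ = 0) (hiso2 : herm H p₂ p₂ = 0)
    (hn1 : herm H c₁ p₂ ≠ 0) (hn2 : herm H p₁ c₂ ≠ 0)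
    (hn4 : herm H p₁ p₂ ≠ 0)
    (horth1 : herm H p₁ c₁ = 0) (horth2 : herm H p₂ c₂ = 0) :
    herm H c₁ c₂ * herm H p₁ p₂ / (herm H c₁ p₂ * herm H p₁ c₂) ≠ 1 ∧
    Complex.normSq (herm H c₁ c₂) / ((herm H c₁ c₁).re * (herm H c₂ c₂).re) =
      Complex.normSq
        ((herm H c₁ c₂ * herm H p₁ p₂ / (herm H c₁ p₂ * herm H p₁ c₂)) /
         (herm H c₁ c₂ * herm H p₁ p₂ / (herm H c₁ p₂ * herm H p₁ c₂) - 1)) :=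
  ne_one_and_normSq_div_eq_of_normSq_sub_eq (mul_pos hc1 hc2) hn4 (mul_ne_zero hn1 hn2)
    (normSq_mul_sub_mul_eq_of_flags hH hiso1 hiso2 horth1 horth2)

/-- The m-invariant of a pair of flags in generic position satisfies m₁₂ ≠ 1 and
φ₁₂ = |m₁₂/(m₁₂−1)|². -/
theorem stmt5 (H : Matrix (Fin 3) (Fin 3) ℂ) (hH : Hᴴ = H)
    (hsig : ∃ P : Matrix (Fin 3) (Fin 3) ℂ, IsUnit P.det ∧
      Pᴴ * H * P = Matrix.diagonal ![1, 1, -1])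
    (c₁ c₂ p₁ p₂ : Fin 3 → ℂ)
    (hc1 : 0 < (herm H c₁ c₁).re) (hc2 : 0 < (herm H c₂ c₂).re)
    (hind : LinearIndependent ℂ ![c₁, c₂])
    (hp1 : p₁ ≠ 0) (hp2 : p₂ ≠ 0)
    (hiso1 : herm H p₁ p₁ = 0) (hiso2 : herm H p₂ p₂ = 0)
    (hn1 : herm H c₁ p₂ ≠ 0) (hn2 : herm H p₁ c₂ ≠ 0)
    (hn3 : herm H c₁ c₂ ≠ 0) (hn4 : herm H p₁ p₂ ≠ 0)
    (horth1 : herm H p₁ c₁ = 0) (horth2 : herm H p₂ c₂ = 0) :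
    herm H c₁ c₂ * herm H p₁ p₂ / (herm H c₁ p₂ * herm H p₁ c₂) ≠ 1 ∧
    Complex.normSq (herm H c₁ c₂) / ((herm H c₁ c₁).re * (herm H c₂ c₂).re) =
      Complex.normSq
        ((herm H c₁ c₂ * herm H p₁ p₂ / (herm H c₁ p₂ * herm H p₁ c₂)) /
         (herm H c₁ c₂ * herm H p₁ p₂ / (herm H c₁ p₂ * herm H p₁ c₂) - 1)) :=
  stmt5_general H hH c₁ c₂ p₁ p₂ hc1 hc2 hiso1 hiso2 hn1 hn2 hn4 horth1 horth2
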